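/- Let X be a topological space, 𝔅 a collection of open subsets of X, n ≥ 0, and let O be a function assigning to each nonempty subset of {0,…,n} an element of 𝔅. Let H be the simplicial set whose p-simplices are pairs (g, U) where g : ⟨p⟩ → ⟨n⟩ is an arbitrary function and U assigns to each nonempty subset A ⊆ {0,…,p} an element U(A) ∈ 𝔅 with U(A) ⊆ O(g(A)), where a weakly increasing map u : ⟨q⟩ → ⟨p⟩ acts by (g, U) ↦ (g∘u, A ↦ U(u(A))). Then H is a trivial (contractible) Kan complex: H is nonempty and every map ∂Δ^p → H, p ≥ 1, extends to Δ^p. -/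

import Mathlib

open CategoryTheory Opposite Simplicial

lemma O_congr {γ : Sort*} {k : ℕ}
    (O : ∀ A : Finset (Fin k), A.Nonempty → γ)
    {A B : Finset (Fin k)} (h : A = B) {hA : A.Nonempty} {hB : B.Nonempty} :
    O A hA = O B hB := by subst h; rfl

variable {X : Type}

/-- A `p`-simplex of the simplicial set `H`: a pair `(g, U)` where `g : ⟨p⟩ → ⟨n⟩` is
an arbitrary function and `U` assigns to each nonempty subset `A ⊆ {0, …, p}` an
element `U(A) ∈ 𝔅` with `U(A) ⊆ O(g(A))`. -/
structure FillSimplex (𝔅 : Set (Set X)) (n : ℕ)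
    (O : ∀ A : Finset (Fin (n + 1)), A.Nonempty → Set X) (p : ℕ) : Type where
  g : Fin (p + 1) → Fin (n + 1)
  sec : ∀ A : Finset (Fin (p + 1)), A.Nonempty → Set X
  mem : ∀ A hA, sec A hA ∈ 𝔅
  sub : ∀ A hA, sec A hA ⊆ O (A.image g) (hA.image g)

lemma FillSimplex.ext' {𝔅 : Set (Set X)} {n : ℕ}
    {O : ∀ A : Finset (Fin (n + 1)), A.Nonempty → Set X} {p : ℕ}
    {s t : FillSimplex 𝔅 n O p} (hg : s.g = t.g)
    (hsec : ∀ A hA, s.sec A hA = t.sec A hA) : s = t := by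
  obtain ⟨g₁, u₁, m₁, s₁⟩ := s
  obtain ⟨g₂, u₂, m₂, s₂⟩ := t
  obtain rfl : g₁ = g₂ := hg
  obtain rfl : u₁ = u₂ := by funext A hA; exact hsec A hA
  rfl

/-- The simplicial set `H` whose `p`-simplices are pairs `(g, U)` with
`g : ⟨p⟩ → ⟨n⟩` arbitrary and `U(A) ∈ 𝔅`, `U(A) ⊆ O(g(A))` for every nonempty
`A ⊆ {0, …, p}`; a weakly increasing `u` acts by `(g, U) ↦ (g ∘ u, A ↦ U(u(A)))`. -/
def fillSSet (𝔅 : Set (Set X)) (n : ℕ)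
    (O : ∀ A : Finset (Fin (n + 1)), A.Nonempty → Set X) : SSet where
  obj a := FillSimplex 𝔅 n O a.unop.len
  map {a b} u := TypeCat.ofHom fun s =>
    { g := s.g ∘ u.unop.toOrderHom
      sec := fun A hA => s.sec (A.image u.unop.toOrderHom) (hA.image _)
      mem := fun A hA => s.mem _ _
      sub := fun A hA => (s.sub _ _).trans
        (le_of_eq (O_congr O (by simp [Finset.image_image]))) }
  map_id a := by
    ext s
    exact FillSimplex.ext' rfl (fun A hA => O_congr s.sec (by simp))
  map_comp {a b c} u v := by
    ext s
    exact FillSimplex.ext' rfl (fun A hA => O_congr s.sec (by simp [Finset.image_image]))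


/-!
A simplex of `H` is its vertex map `g` together with the values `U(A)`, and `U(A)` only
depends on the face spanned by `A`. Hence a map `τ : ∂Δ^{p+1} → H` already prescribes the
vertices and the value on every proper subset `A ⊊ {0, …, p+1}`, read off the face of
`∂Δ^{p+1}` spanned by `A`. The one missing value, `U` of the whole vertex set, is free
subject to lying in `𝔅` and inside `O(g({0, …, p+1}))`, and `O(g({0, …, p+1}))` itself is
such a choice.
-/

open SimplexCategory SSet Finset

lemma Function.not_surjective_const {α β : Type*} [Nontrivial β] (b : β) :
    ¬ Function.Surjective (fun _ : α => b) := fun h => by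
  obtain ⟨c, hc⟩ := exists_ne b
  obtain ⟨_, hx⟩ := h c
  exact hc hx.symm

namespace Finset

variable {α : Type*} [LinearOrder α]

/-- The increasing enumeration of `A`, indexed by `⟨#A - 1⟩` so that it is a simplex. -/
def faceEmb (A : Finset α) (hA : A.Nonempty) : Fin (A.card - 1 + 1) →o α :=
  (A.orderEmbOfFin (k := A.card - 1 + 1) (Nat.sub_one_add_one hA.card_pos.ne').symm).toOrderHom

lemma image_univ_faceEmb (A : Finset α) (hA : A.Nonempty) :
    univ.image (faceEmb A hA) = A :=
  image_orderEmbOfFin_univ A (Nat.sub_one_add_one hA.card_pos.ne').symm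

lemma faceEmb_not_surjective [Fintype α] {A : Finset α} (hA : A.Nonempty) (hA' : A ≠ univ) :
    ¬ Function.Surjective (faceEmb A hA) := fun h =>
  hA' (by rw [← image_univ_faceEmb A hA, image_univ_of_surjective h])

/-- Epi-mono factorization of a monotone map out of `Fin (m + 1)` through its image. -/
lemma exists_surjective_faceEmb_comp {m : ℕ} (h : Fin (m + 1) →o α) :
    ∃ π : Fin (m + 1) →o Fin ((univ.image h).card - 1 + 1), Function.Surjective π ∧
      (faceEmb (univ.image h) (univ_nonempty.image h)).comp π = h := by
  set A := univ.image h
  have hA : A.card = A.card - 1 + 1 :=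
    (Nat.sub_one_add_one (univ_nonempty.image h).card_pos.ne').symm
  let iso := A.orderIsoOfFin hA
  have hmem (j : Fin (m + 1)) : h j ∈ A := mem_image_of_mem h (mem_univ j)
  refine ⟨⟨fun j => iso.symm ⟨h j, hmem j⟩, fun _ _ hab => iso.symm.monotone (h.monotone hab)⟩,
    fun y => ?_, OrderHom.ext _ _ (funext fun j => congrArg Subtype.val
      (iso.apply_symm_apply ⟨h j, hmem j⟩))⟩
  obtain ⟨j, -, hj⟩ := mem_image.mp (iso y).2
  exact ⟨j, iso.symm_apply_eq.mpr (Subtype.ext hj)⟩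

end Finset

namespace SSet.boundary

variable {p : ℕ}

def mkOfNotSurjective {q : ℕ} (f : Fin (q + 1) →o Fin (p + 2))
    (hf : ¬ Function.Surjective f) : (∂Δ[p + 1] : SSet) _⦋q⦌ :=
  ⟨stdSimplex.objMk f, hf⟩

lemma app_mkOfNotSurjective_comp {Y : SSet} (τ : (∂Δ[p + 1] : SSet) ⟶ Y) {q r : ℕ}
    (f : Fin (q + 1) →o Fin (p + 2)) (hf : ¬ Function.Surjective f)
    (u : Fin (r + 1) →o Fin (q + 1)) {h : Fin (r + 1) →o Fin (p + 2)}
    (hh : ¬ Function.Surjective h) (hfu : f.comp u = h) :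
    τ.app _ (mkOfNotSurjective h hh) = Y.map (mkHom u).op (τ.app _ (mkOfNotSurjective f hf)) := by
  subst hfu
  exact NatTrans.naturality_apply τ (mkHom u).op (mkOfNotSurjective f hf)

end SSet.boundary

namespace FillSimplex

open SSet.boundary

variable {𝔅 : Set (Set X)} {n : ℕ} {O : ∀ A : Finset (Fin (n + 1)), A.Nonempty → Set X} {p : ℕ}
  (τ : (∂Δ[p + 1] : SSet) ⟶ fillSSet 𝔅 n O)

def vertex (i : Fin (p + 2)) : Fin (n + 1) :=
  (τ.app _ (mkOfNotSurjective (OrderHom.const (Fin 1) i)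
    (Function.not_surjective_const i))).g 0

lemma g_app_mkOfNotSurjective {q : ℕ} (f : Fin (q + 1) →o Fin (p + 2))
    (hf : ¬ Function.Surjective f) :
    (τ.app _ (mkOfNotSurjective f hf)).g = vertex τ ∘ f := by
  funext j
  exact congrArg (fun s => FillSimplex.g s 0) (app_mkOfNotSurjective_comp τ f hf
    (OrderHom.const (Fin 1) j) (Function.not_surjective_const (f j)) rfl).symm

noncomputable def faceSec (A : Finset (Fin (p + 2))) (hA : A.Nonempty) : Set X :=
  if h : A = univ then O (univ.image (vertex τ)) (univ_nonempty.image _)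
  else (τ.app _ (mkOfNotSurjective (faceEmb A hA) (faceEmb_not_surjective hA h))).sec
    univ univ_nonempty

lemma sec_univ_app_mkOfNotSurjective {m : ℕ} (h : Fin (m + 1) →o Fin (p + 2))
    (hh : ¬ Function.Surjective h) :
    (τ.app _ (mkOfNotSurjective h hh)).sec univ univ_nonempty
      = faceSec τ (univ.image h) (univ_nonempty.image h) := by
  obtain ⟨π, hπ, hcomp⟩ := exists_surjective_faceEmb_comp h
  have hne : univ.image h ≠ univ := fun hu =>
    hh (fun c => by simpa using (hu ▸ mem_univ c : c ∈ univ.image h))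
  rw [faceSec, dif_neg hne,
    app_mkOfNotSurjective_comp τ _ (faceEmb_not_surjective _ hne) π hh hcomp]
  exact O_congr _ (image_univ_of_surjective hπ)

lemma sec_app_mkOfNotSurjective {q : ℕ} (f : Fin (q + 1) →o Fin (p + 2))
    (hf : ¬ Function.Surjective f) (B : Finset (Fin (q + 1))) (hB : B.Nonempty) :
    (τ.app _ (mkOfNotSurjective f hf)).sec B hB = faceSec τ (B.image f) (hB.image f) := by
  have hfe : ¬ Function.Surjective (f.comp (faceEmb B hB)) :=
    fun h => hf (Function.Surjective.of_comp h)
  calc (τ.app _ (mkOfNotSurjective f hf)).sec B hB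
      = (τ.app _ (mkOfNotSurjective (f.comp (faceEmb B hB)) hfe)).sec univ univ_nonempty := by
        rw [app_mkOfNotSurjective_comp τ f hf _ hfe rfl]
        exact O_congr _ (image_univ_faceEmb B hB).symm
    _ = faceSec τ (B.image f) (hB.image f) := by
        rw [sec_univ_app_mkOfNotSurjective]
        exact O_congr _ <| image_image.symm.trans <| congrArg (image f) (image_univ_faceEmb B hB)

noncomputable def filler (hO : ∀ A hA, O A hA ∈ 𝔅) : FillSimplex 𝔅 n O (p + 1) where
  g := vertex τ
  sec := faceSec τ
  mem A hA := by
    unfold faceSec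
    split
    · exact hO _ _
    · exact (τ.app _ _).mem _ _
  sub A hA := by
    unfold faceSec
    split
    · next h => subst h; rfl
    · next h =>
      refine ((τ.app _ _).sub univ univ_nonempty).trans (le_of_eq (O_congr O ?_))
      rw [g_app_mkOfNotSurjective, ← image_image, image_univ_faceEmb]

lemma map_filler (hO : ∀ A hA, O A hA ∈ 𝔅) {q : ℕ} (f : Fin (q + 1) →o Fin (p + 2))
    (hf : ¬ Function.Surjective f) :
    (fillSSet 𝔅 n O).map (mkHom f).op (filler τ hO) = τ.app _ (mkOfNotSurjective f hf) :=
  FillSimplex.ext' (g_app_mkOfNotSurjective τ f hf).symm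
    (fun B hB => (sec_app_mkOfNotSurjective τ f hf B hB).symm)

end FillSimplex

theorem stmt12_general (𝔅 : Set (Set X))
    (n : ℕ) (O : ∀ A : Finset (Fin (n + 1)), A.Nonempty → Set X)
    (hO : ∀ A hA, O A hA ∈ 𝔅) :
    Nonempty ((fillSSet 𝔅 n O).obj (op (SimplexCategory.mk 0))) ∧
    ∀ (p : ℕ) (τ : (∂Δ[p + 1] : SSet) ⟶ fillSSet 𝔅 n O),
      ∃ g : Δ[p + 1] ⟶ fillSSet 𝔅 n O,
        (∂Δ[p + 1]).ι ≫ g = τ := by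
  refine ⟨⟨{ g := fun _ => 0
             sec := fun A hA => O (A.image fun _ => 0) (hA.image _)
             mem := fun _ _ => hO _ _
             sub := fun _ _ => subset_rfl }⟩,
    fun p τ => ⟨yonedaEquiv.symm (FillSimplex.filler τ hO), ?_⟩⟩
  ext m ⟨α, hα⟩
  exact FillSimplex.map_filler τ hO (stdSimplex.asOrderHom α) hα

/-- for any collection `𝔅` of open subsets of `X`, any `n ≥ 0` and any
assignment `O` of elements of `𝔅` to the nonempty subsets of `{0, …, n}`, the
simplicial set `H` is a trivial (contractible) Kan complex: it is nonempty and every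
map `∂Δ^p → H` with `p ≥ 1` extends to `Δ^p`. -/
theorem stmt12 [TopologicalSpace X] (𝔅 : Set (Set X)) (h𝔅 : ∀ B ∈ 𝔅, IsOpen B)
    (n : ℕ) (O : ∀ A : Finset (Fin (n + 1)), A.Nonempty → Set X)
    (hO : ∀ A hA, O A hA ∈ 𝔅) :
    Nonempty ((fillSSet 𝔅 n O).obj (op (SimplexCategory.mk 0))) ∧
    ∀ (p : ℕ) (τ : (∂Δ[p + 1] : SSet) ⟶ fillSSet 𝔅 n O),
      ∃ g : Δ[p + 1] ⟶ fillSSet 𝔅 n O,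
        (∂Δ[p + 1]).ι ≫ g = τ :=
  stmt12_general 𝔅 n O hO
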